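/- The projective arc β_g is a source and the injective arc γ_0 is a sink of the quiver of admissible arcs: neither π[1_∂, 0_∂′] nor π[0_∂, (−1)_∂′] is preprojective (so no preprojective arc admits an elementary move to β_g = π[0_∂, 0_∂′]), and neither π[(−1)_∂′, (2−g)_∂] nor π[(−2)_∂′, (1−g)_∂] is preinjective (so no elementary move from γ_0 = π[(−2)_∂′, (2−g)_∂] lands on a preinjective arc). -/
import Mathlib


/-- Shift the first entry of every point of `A` by `d` (well defined on arcs, since it
commutes with the deck transformations). -/
def shiftFst (d : ℤ) (A : Set (ℤ × ℤ)) : Set (ℤ × ℤ) := (fun p => (p.1 + d, p.2)) '' A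

/-- Shift the second entry of every point of `A` by `d` (well defined on arcs). -/
def shiftSnd (d : ℤ) (A : Set (ℤ × ℤ)) : Set (ℤ × ℤ) := (fun p => (p.1, p.2 + d)) '' A

/-- The bridging arc `π[x_∂, y_∂']` of the annulus `P_{g,h}`, from the outer boundary `∂`
to the inner boundary `∂'`: the orbit of `(x, y) ∈ ℤ × ℤ` under `σ·(x,y) = (x+g, y+h)`. -/
def orbPP (g h x y : ℤ) : Set (ℤ × ℤ) := {q : ℤ × ℤ | ∃ k : ℤ, q = (x + k * g, y + k * h)}

/-- Elementary moves between bridging arcs from `∂` to `∂'`: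
`π[x_∂, y_∂'] → π[(x-1)_∂, y_∂']` and `π[x_∂, y_∂'] → π[x_∂, (y+1)_∂']`. -/
def elemPP (A B : Set (ℤ × ℤ)) : Prop := B = shiftFst (-1) A ∨ B = shiftSnd 1 A

/-- A bridging arc from `∂` to `∂'` is preprojective if it can be reached from
`β_g = π[0_∂, 0_∂']` by a finite (possibly empty) sequence of elementary moves. -/
def IsPreproj (g h : ℤ) (A : Set (ℤ × ℤ)) : Prop :=
  Relation.ReflTransGen elemPP (orbPP g h 0 0) A

/-- The projective arcs: `β_i = π[(i-g)_∂, 0_∂']` for `0 ≤ i ≤ g` and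
`β_i = π[0_∂, (i-g)_∂']` for `g < i ≤ n`. -/
def betaArc (g h i : ℤ) : Set (ℤ × ℤ) :=
  if i ≤ g then orbPP g h (i - g) 0 else orbPP g h 0 (i - g)

/-- The bridging arc `π[j_∂', x_∂]` of the annulus `P_{g,h}`, from the inner boundary `∂'`
to the outer boundary `∂`: the orbit of `(j, x) ∈ ℤ × ℤ` under `σ·(j,x) = (j+h, x+g)`. -/
def orbPI (g h j x : ℤ) : Set (ℤ × ℤ) := {q : ℤ × ℤ | ∃ k : ℤ, q = (j + k * h, x + k * g)}

/-- Elementary moves between bridging arcs from `∂'` to `∂`: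
`π[j_∂', x_∂] → π[(j+1)_∂', x_∂]` and `π[j_∂', x_∂] → π[j_∂', (x-1)_∂]`. -/
def elemPI (A B : Set (ℤ × ℤ)) : Prop := B = shiftFst 1 A ∨ B = shiftSnd (-1) A

/-- The injective arcs: `γ_i = π[(-2)_∂', (i-g+2)_∂]` for `0 ≤ i ≤ g` and
`γ_i = π[(i-g-2)_∂', 2_∂]` for `g < i ≤ n`. -/
def gammaArc (g h i : ℤ) : Set (ℤ × ℤ) :=
  if i ≤ g then orbPI g h (-2) (i - g + 2) else orbPI g h (i - g - 2) 2

/-- A bridging arc from `∂'` to `∂` is preinjective if `γ_0` can be reached from it by a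
finite (possibly empty) sequence of elementary moves. -/
def IsPreinj (g h : ℤ) (A : Set (ℤ × ℤ)) : Prop :=
  Relation.ReflTransGen elemPI A (gammaArc g h 0)


lemma shiftFst_orbPP (g h x y d : ℤ) : shiftFst d (orbPP g h x y) = orbPP g h (x + d) y := by
  ext ⟨a, b⟩
  simp only [shiftFst, Set.mem_image, orbPP, Set.mem_setOf_eq, Prod.exists, Prod.mk.injEq]
  constructor
  · rintro ⟨p, q, ⟨k, hk1, hk2⟩, ha, hb⟩
    exact ⟨k, by linarith, by linarith⟩
  · rintro ⟨k, hk1, hk2⟩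
    exact ⟨x + k * g, y + k * h, ⟨k, rfl, rfl⟩, by linarith, by linarith⟩

lemma shiftSnd_orbPP (g h x y d : ℤ) : shiftSnd d (orbPP g h x y) = orbPP g h x (y + d) := by
  ext ⟨a, b⟩
  simp only [shiftSnd, Set.mem_image, orbPP, Set.mem_setOf_eq, Prod.exists, Prod.mk.injEq]
  constructor
  · rintro ⟨p, q, ⟨k, hk1, hk2⟩, ha, hb⟩
    exact ⟨k, by linarith, by linarith⟩
  · rintro ⟨k, hk1, hk2⟩
    exact ⟨x + k * g, y + k * h, ⟨k, rfl, rfl⟩, by linarith, by linarith⟩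

lemma shiftFst_orbPI (g h j x d : ℤ) : shiftFst d (orbPI g h j x) = orbPI g h (j + d) x := by
  ext ⟨a, b⟩
  simp only [shiftFst, Set.mem_image, orbPI, Set.mem_setOf_eq, Prod.exists, Prod.mk.injEq]
  constructor
  · rintro ⟨p, q, ⟨k, hk1, hk2⟩, ha, hb⟩
    exact ⟨k, by linarith, by linarith⟩
  · rintro ⟨k, hk1, hk2⟩
    exact ⟨j + k * h, x + k * g, ⟨k, rfl, rfl⟩, by linarith, by linarith⟩

lemma shiftSnd_orbPI (g h j x d : ℤ) : shiftSnd d (orbPI g h j x) = orbPI g h j (x + d) := by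
  ext ⟨a, b⟩
  simp only [shiftSnd, Set.mem_image, orbPI, Set.mem_setOf_eq, Prod.exists, Prod.mk.injEq]
  constructor
  · rintro ⟨p, q, ⟨k, hk1, hk2⟩, ha, hb⟩
    exact ⟨k, by linarith, by linarith⟩
  · rintro ⟨k, hk1, hk2⟩
    exact ⟨j + k * h, x + k * g, ⟨k, rfl, rfl⟩, by linarith, by linarith⟩

lemma shiftFst_zero (A : Set (ℤ × ℤ)) : shiftFst 0 A = A := by
  ext ⟨a, b⟩
  simp [shiftFst]

lemma shiftSnd_zero (A : Set (ℤ × ℤ)) : shiftSnd 0 A = A := by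
  ext ⟨a, b⟩
  simp [shiftSnd]

lemma shiftFst_shiftFst (d e : ℤ) (A : Set (ℤ × ℤ)) :
    shiftFst d (shiftFst e A) = shiftFst (e + d) A := by
  ext ⟨a, b⟩
  simp only [shiftFst, Set.mem_image, Prod.exists, Prod.mk.injEq]
  constructor
  · rintro ⟨p, q, ⟨r, s, hr, h1, h2⟩, ha, hb⟩
    exact ⟨r, s, hr, by linarith, by simp_all⟩
  · rintro ⟨p, q, hp, ha, hb⟩
    exact ⟨p + e, q, ⟨p, q, hp, rfl, rfl⟩, by linarith, hb⟩

lemma shiftSnd_shiftSnd (d e : ℤ) (A : Set (ℤ × ℤ)) :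
    shiftSnd d (shiftSnd e A) = shiftSnd (e + d) A := by
  ext ⟨a, b⟩
  simp only [shiftSnd, Set.mem_image, Prod.exists, Prod.mk.injEq]
  constructor
  · rintro ⟨p, q, ⟨r, s, hr, h1, h2⟩, ha, hb⟩
    exact ⟨r, s, hr, by simp_all, by linarith⟩
  · rintro ⟨p, q, hp, ha, hb⟩
    exact ⟨p, q + e, ⟨p, q, hp, rfl, rfl⟩, ha, by linarith⟩

lemma orbPP_eq_iff {g h x y x' y' : ℤ} (he : orbPP g h x y = orbPP g h x' y') :
    ∃ k : ℤ, x' = x + k * g ∧ y' = y + k * h := by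
  have hm : (x', y') ∈ orbPP g h x' y' := ⟨0, by simp⟩
  rw [← he] at hm
  obtain ⟨k, hk⟩ := hm
  simp only [Prod.mk.injEq] at hk
  exact ⟨k, hk⟩

lemma orbPI_eq_iff {g h j x j' x' : ℤ} (he : orbPI g h j x = orbPI g h j' x') :
    ∃ k : ℤ, j' = j + k * h ∧ x' = x + k * g := by
  have hm : (j', x') ∈ orbPI g h j' x' := ⟨0, by simp⟩
  rw [← he] at hm
  obtain ⟨k, hk⟩ := hm
  simp only [Prod.mk.injEq] at hk
  exact ⟨k, hk⟩

lemma preproj_form {g h : ℤ} {A : Set (ℤ × ℤ)} (hA : IsPreproj g h A) :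
    ∃ a b : ℤ, 0 ≤ a ∧ 0 ≤ b ∧ A = orbPP g h (-a) b := by
  induction hA with
  | refl => exact ⟨0, 0, le_refl 0, le_refl 0, by norm_num⟩
  | tail _ hstep ih =>
    obtain ⟨a, b, ha, hb, rfl⟩ := ih
    rcases hstep with rfl | rfl
    · refine ⟨a + 1, b, by linarith, hb, ?_⟩
      rw [shiftFst_orbPP]
      ring_nf
    · exact ⟨a, b + 1, ha, by linarith, by rw [shiftSnd_orbPP]⟩

lemma preinj_form {g h : ℤ} {A : Set (ℤ × ℤ)} (hA : IsPreinj g h A) (hg : (0:ℤ) ≤ g) :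
    ∃ a b : ℤ, 0 ≤ a ∧ 0 ≤ b ∧ A = orbPI g h (-2 - a) (2 - g + b) := by
  unfold IsPreinj at hA
  have hγ : gammaArc g h 0 = orbPI g h (-2) (2 - g) := by
    unfold gammaArc
    rw [if_pos hg]
    ring_nf
  rw [hγ] at hA
  induction hA using Relation.ReflTransGen.head_induction_on with
  | refl => exact ⟨0, 0, le_refl 0, le_refl 0, by norm_num⟩
  | head hstep _ ih =>
    obtain ⟨a, b, ha, hb, hB⟩ := ih
    rcases hstep with hs | hs
    · refine ⟨a + 1, b, by linarith, hb, ?_⟩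
      have h2 := congrArg (shiftFst (-1)) hs
      rw [shiftFst_shiftFst] at h2
      norm_num [shiftFst_zero] at h2
      rw [← h2, hB, shiftFst_orbPI]
      ring_nf
    · refine ⟨a, b + 1, ha, by linarith, ?_⟩
      have h2 := congrArg (shiftSnd 1) hs
      rw [shiftSnd_shiftSnd] at h2
      norm_num [shiftSnd_zero] at h2
      rw [← h2, hB, shiftSnd_orbPI]
      ring_nf

lemma no_k {g h k : ℤ} (hh : 1 ≤ h) (hg : 1 ≤ g) (hkg : k * g ≤ -1) (hkh : 0 ≤ k * h) :
    False := by
  rcases le_or_gt 0 k with hk | hk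
  · nlinarith
  · nlinarith

/-- the projective arc `β_g` is a source and the injective arc `γ_0` is a
sink of the quiver of admissible arcs: neither `π[1_∂, 0_∂']` nor `π[0_∂, (-1)_∂']` is
preprojective (so no preprojective arc has an elementary move to `β_g = π[0_∂, 0_∂']`),
and neither `π[(-1)_∂', (2-g)_∂]` nor `π[(-2)_∂', (1-g)_∂]` is preinjective (so no
elementary move from `γ_0 = π[(-2)_∂', (2-g)_∂]` lands on a preinjective arc). -/
theorem beta_g_source_gamma_0_sink (g h : ℤ) (hh : 1 ≤ h) (hgh : h ≤ g) :
    ¬ IsPreproj g h (orbPP g h 1 0) ∧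
    ¬ IsPreproj g h (orbPP g h 0 (-1)) ∧
    (∀ B : Set (ℤ × ℤ), IsPreproj g h B → ¬ elemPP B (betaArc g h g)) ∧
    ¬ IsPreinj g h (orbPI g h (-1) (2 - g)) ∧
    ¬ IsPreinj g h (orbPI g h (-2) (1 - g)) ∧
    (∀ B : Set (ℤ × ℤ), elemPI (gammaArc g h 0) B → ¬ IsPreinj g h B) := by
  have hg : (1:ℤ) ≤ g := hh.trans hgh
  have not10 : ¬ IsPreproj g h (orbPP g h 1 0) := by
    intro hp
    obtain ⟨a, b, ha, hb, he⟩ := preproj_form hp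
    obtain ⟨k, hk1, hk2⟩ := orbPP_eq_iff he
    exact no_k (k := k) hh hg (by linarith) (by linarith)
  have not0m1 : ¬ IsPreproj g h (orbPP g h 0 (-1)) := by
    intro hp
    obtain ⟨a, b, ha, hb, he⟩ := preproj_form hp
    obtain ⟨k, hk1, hk2⟩ := orbPP_eq_iff he
    exact no_k (k := -k) hg hh (by rw [neg_mul]; linarith) (by rw [neg_mul]; linarith)
  have notm1 : ¬ IsPreinj g h (orbPI g h (-1) (2 - g)) := by
    intro hp
    obtain ⟨a, b, ha, hb, he⟩ := preinj_form hp (by linarith)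
    obtain ⟨k, hk1, hk2⟩ := orbPI_eq_iff he
    exact no_k (k := k) hg hh (by linarith) (by linarith)
  have notm2 : ¬ IsPreinj g h (orbPI g h (-2) (1 - g)) := by
    intro hp
    obtain ⟨a, b, ha, hb, he⟩ := preinj_form hp (by linarith)
    obtain ⟨k, hk1, hk2⟩ := orbPI_eq_iff he
    exact no_k (k := -k) hh hg (by rw [neg_mul]; linarith) (by rw [neg_mul]; linarith)
  refine ⟨not10, not0m1, ?_, notm1, notm2, ?_⟩
  · intro B hB hele
    obtain ⟨a, b, ha, hb, rfl⟩ := preproj_form hB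
    have hβ : betaArc g h g = orbPP g h 0 0 := by
      unfold betaArc
      rw [if_pos (le_refl g)]
      norm_num
    rcases hele with hs | hs
    · rw [hβ, shiftFst_orbPP] at hs
      obtain ⟨k, hk1, hk2⟩ := orbPP_eq_iff hs.symm
      exact no_k (k := -k) hh hg (by rw [neg_mul]; linarith) (by rw [neg_mul]; linarith)
    · rw [hβ, shiftSnd_orbPP] at hs
      obtain ⟨k, hk1, hk2⟩ := orbPP_eq_iff hs.symm
      exact no_k (k := k) hg hh (by linarith) (by linarith)
  · intro B hele hinj
    have hγ : gammaArc g h 0 = orbPI g h (-2) (2 - g) := by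
      unfold gammaArc
      rw [if_pos (by linarith : (0:ℤ) ≤ g)]
      ring_nf
    rcases hele with rfl | rfl
    · rw [hγ, shiftFst_orbPI] at hinj
      norm_num at hinj
      exact notm1 hinj
    · rw [hγ, shiftSnd_orbPI] at hinj
      have he : (2 - g + -1 : ℤ) = 1 - g := by ring
      rw [he] at hinj
      exact notm2 hinj
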